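/- For the spiral pincer sweep with n agents, the confinement condition V_T·T_c = 2r·V_s/(V_s + V_T) with T_c = (R_0 − r)(exp(2π·V_T/(n·√(V_s² − V_T²))) − 1)/V_T has at most one solution V_s in (V_T, ∞), since the left-hand side V_T·T_c is strictly decreasing in V_s while the right-hand side 2r·V_s/(V_s + V_T) is strictly increasing in V_s on (V_T, ∞). -/
import Mathlib


open Real

theorem spiral_pincer_critical_velocity_unique
    (V_T r R₀ : ℝ) (n : ℕ)
    (hV : 0 < V_T) (hr : 0 < r) (hrR : r < R₀) (hn : 0 < n) :
    StrictAntiOn (fun V_s : ℝ =>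
        (R₀ - r) * (Real.exp (2 * π * V_T / (n * Real.sqrt (V_s ^ 2 - V_T ^ 2))) - 1))
      (Set.Ioi V_T) ∧
    StrictMonoOn (fun V_s : ℝ => 2 * r * V_s / (V_s + V_T)) (Set.Ioi V_T) ∧
    ∀ x ∈ Set.Ioi V_T, ∀ y ∈ Set.Ioi V_T,
      (R₀ - r) * (Real.exp (2 * π * V_T / (n * Real.sqrt (x ^ 2 - V_T ^ 2))) - 1) =
        2 * r * x / (x + V_T) →
      (R₀ - r) * (Real.exp (2 * π * V_T / (n * Real.sqrt (y ^ 2 - V_T ^ 2))) - 1) =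
        2 * r * y / (y + V_T) →
      x = y := by
  have hnR : (0:ℝ) < n := by exact_mod_cast hn
  have hfa : StrictAntiOn (fun V_s : ℝ =>
        (R₀ - r) * (Real.exp (2 * π * V_T / (n * Real.sqrt (V_s ^ 2 - V_T ^ 2))) - 1))
      (Set.Ioi V_T) := by
    intro a ha b hb hab
    simp only [Set.mem_Ioi] at ha hb
    have ha0 : 0 < a := hV.trans ha
    have hsa : 0 < a ^ 2 - V_T ^ 2 := by nlinarith
    have hsb : 0 < b ^ 2 - V_T ^ 2 := by nlinarith
    have hsq : Real.sqrt (a ^ 2 - V_T ^ 2) < Real.sqrt (b ^ 2 - V_T ^ 2) := by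
      apply Real.sqrt_lt_sqrt hsa.le
      nlinarith
    have hra : 0 < Real.sqrt (a ^ 2 - V_T ^ 2) := Real.sqrt_pos.mpr hsa
    have hnum : 0 < 2 * π * V_T := by positivity
    have hdiv : 2 * π * V_T / (n * Real.sqrt (b ^ 2 - V_T ^ 2)) <
        2 * π * V_T / (n * Real.sqrt (a ^ 2 - V_T ^ 2)) := by
      apply div_lt_div_of_pos_left hnum (by positivity)
      exact mul_lt_mul_of_pos_left hsq hnR
    have := Real.exp_lt_exp.mpr hdiv
    have hRr : 0 < R₀ - r := by linarith
    dsimp only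
    nlinarith
  refine ⟨hfa, ?_, ?_⟩
  · intro a ha b hb hab
    simp only [Set.mem_Ioi] at ha hb
    have ha0 : 0 < a + V_T := by linarith
    have hb0 : 0 < b + V_T := by linarith
    dsimp only
    rw [div_lt_div_iff₀ ha0 hb0]
    nlinarith [mul_lt_mul_of_pos_left hab (by positivity : (0:ℝ) < 2 * r * V_T)]
  · intro x hx y hy hfx hfy
    by_contra hne
    rcases lt_or_gt_of_ne hne with h | h
    · have h1 := hfa hx hy h
      have h2 : 2 * r * x / (x + V_T) < 2 * r * y / (y + V_T) := by
        simp only [Set.mem_Ioi] at hx hy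
        rw [div_lt_div_iff₀ (by linarith) (by linarith)]
        nlinarith [mul_lt_mul_of_pos_left h (by positivity : (0:ℝ) < 2 * r * V_T)]
      dsimp only at h1
      rw [hfx, hfy] at h1
      linarith
    · have h1 := hfa hy hx h
      have h2 : 2 * r * y / (y + V_T) < 2 * r * x / (x + V_T) := by
        simp only [Set.mem_Ioi] at hx hy
        rw [div_lt_div_iff₀ (by linarith) (by linarith)]
        nlinarith [mul_lt_mul_of_pos_left h (by positivity : (0:ℝ) < 2 * r * V_T)]
      dsimp only at h1
      rw [hfx, hfy] at h1
      linarith
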